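/- If B_{b,t} and B_{b,t'} are two blossoms with the same base b and tenacities t <= t' < tenacity(b) with t' < l_m, then B_{b,t} is a subset of B_{b,t'}. -/

import Mathlib

open scoped Classical

universe u

variable {V : Type u}

/-- A finite-or-infinite undirected graph together with a matching. -/
structure MatchedGraph (V : Type u) where
  adj : V → V → Prop
  symm : ∀ u v, adj u v → adj v u
  loopless : ∀ v, ¬ adj v v
  M : V → V → Prop
  M_symm : ∀ u v, M u v → M v u
  M_sub : ∀ u v, M u v → adj u v
  M_matching : ∀ u v w, M u v → M u w → v = w

namespace MatchedGraph

/-- A vertex is unmatched if no matched edge is incident to it. -/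
def unmatched (g : MatchedGraph V) (v : V) : Prop := ∀ u, ¬ g.M v u

/-- `p` is a simple alternating path starting at `b` and ending at `v`,
whose first edge is unmatched and whose edges alternate unmatched/matched.
(The `i`-th edge is matched iff `i` is odd.) -/
def AltPath (g : MatchedGraph V) (p : List V) (b v : V) : Prop :=
  p.head? = some b ∧ p.getLast? = some v ∧ p.Nodup ∧
  ∀ i, i + 1 < p.length →
    g.adj (p.getD i b) (p.getD (i + 1) b) ∧
      (g.M (p.getD i b) (p.getD (i + 1) b) ↔ i % 2 = 1)

/-- An alternating path from an *unmatched* vertex `f` to `v`. -/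
def AltPathFrom (g : MatchedGraph V) (p : List V) (f v : V) : Prop :=
  g.unmatched f ∧ g.AltPath p f v

/-- Minimum length of an even alternating path from an unmatched vertex to `v`. -/
noncomputable def evenlevel (g : MatchedGraph V) (v : V) : ℕ∞ :=
  sInf {n : ℕ∞ | ∃ p f, g.AltPathFrom p f v ∧ Even (p.length - 1) ∧
    n = ((p.length - 1 : ℕ) : ℕ∞)}

/-- Minimum length of an odd alternating path from an unmatched vertex to `v`. -/
noncomputable def oddlevel (g : MatchedGraph V) (v : V) : ℕ∞ :=
  sInf {n : ℕ∞ | ∃ p f, g.AltPathFrom p f v ∧ Odd (p.length - 1) ∧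
    n = ((p.length - 1 : ℕ) : ℕ∞)}

noncomputable def tenacity (g : MatchedGraph V) (v : V) : ℕ∞ :=
  g.evenlevel v + g.oddlevel v

noncomputable def minlevel (g : MatchedGraph V) (v : V) : ℕ∞ :=
  min (g.evenlevel v) (g.oddlevel v)

noncomputable def maxlevel (g : MatchedGraph V) (v : V) : ℕ∞ :=
  max (g.evenlevel v) (g.oddlevel v)

/-- Minimum length of an augmenting path: an alternating path between two
distinct unmatched vertices. -/
noncomputable def lm (g : MatchedGraph V) : ℕ∞ :=
  sInf {n : ℕ∞ | ∃ p f v, g.AltPathFrom p f v ∧ g.unmatched v ∧ f ≠ v ∧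
    n = ((p.length - 1 : ℕ) : ℕ∞)}

/-- Minimum tenacity of any vertex. -/
noncomputable def tm (g : MatchedGraph V) : ℕ∞ := ⨅ v, g.tenacity v

/-- `p` is an `evenlevel(v)` path starting at the unmatched vertex `f`. -/
def IsEvenlevelPath (g : MatchedGraph V) (p : List V) (f v : V) : Prop :=
  g.AltPathFrom p f v ∧ Even (p.length - 1) ∧
    ((p.length - 1 : ℕ) : ℕ∞) = g.evenlevel v

/-- `p` is an `oddlevel(v)` path starting at the unmatched vertex `f`. -/
def IsOddlevelPath (g : MatchedGraph V) (p : List V) (f v : V) : Prop :=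
  g.AltPathFrom p f v ∧ Odd (p.length - 1) ∧
    ((p.length - 1 : ℕ) : ℕ∞) = g.oddlevel v

/-- `p` is a `minlevel(v)` path starting at the unmatched vertex `f`. -/
def IsMinlevelPath (g : MatchedGraph V) (p : List V) (f v : V) : Prop :=
  g.AltPathFrom p f v ∧ ((p.length - 1 : ℕ) : ℕ∞) = g.minlevel v

/-- `p` is a `maxlevel(v)` path starting at the unmatched vertex `f`. -/
def IsMaxlevelPath (g : MatchedGraph V) (p : List V) (f v : V) : Prop :=
  g.AltPathFrom p f v ∧ ((p.length - 1 : ℕ) : ℕ∞) = g.maxlevel v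

/-- The vertex at position `i` of `p` (whose prefix from `f` has length `i`)
is BFS-honest w.r.t. `p`. -/
def BFSHonest (g : MatchedGraph V) (p : List V) (f : V) (i : ℕ) : Prop :=
  (Even i → g.evenlevel (p.getD i f) = (i : ℕ∞)) ∧
  (Odd i → g.oddlevel (p.getD i f) = (i : ℕ∞))

/-- `u` is a predecessor of `v`: `(u, v)` is the last edge of some
`minlevel(v)` path. -/
def IsPred (g : MatchedGraph V) (u v : V) : Prop :=
  ∃ p f, g.IsMinlevelPath p f v ∧ 2 ≤ p.length ∧ p.getD (p.length - 2) f = u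

/-- A prop is an edge which is the last edge of a minlevel path to one of its
endpoints. -/
def IsPropEdge (g : MatchedGraph V) (u v : V) : Prop :=
  g.IsPred u v ∨ g.IsPred v u

/-- A bridge is an edge that is not a prop. -/
def IsBridge (g : MatchedGraph V) (u v : V) : Prop :=
  g.adj u v ∧ ¬ g.IsPropEdge u v

/-- Tenacity of an edge. -/
noncomputable def etenacity (g : MatchedGraph V) (u v : V) : ℕ∞ :=
  if g.M u v then g.oddlevel u + g.oddlevel v + 1
  else g.evenlevel u + g.evenlevel v + 1

/-- The set `B(v)` of all `F(p, v)`: for each `evenlevel(v)` or `oddlevel(v)`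
path `p`, the vertex on `p` farthest from the unmatched endpoint among the
vertices of tenacity greater than `tenacity(v)`. -/
def Bset (g : MatchedGraph V) (v : V) : Set V :=
  {b | ∃ p f i, (g.IsEvenlevelPath p f v ∨ g.IsOddlevelPath p f v) ∧
    i < p.length ∧ b = p.getD i f ∧ g.tenacity v < g.tenacity b ∧
    ∀ k, i < k → k < p.length → g.tenacity (p.getD k f) ≤ g.tenacity v}

/-- `b` is the (unique) base of `v`. -/
def baseOf (g : MatchedGraph V) (v b : V) : Prop := g.Bset v = {b}

/-- Iterated bases: `iterBase k v b` means `b = base^k(v)` (with `base^0(v) = v`). -/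
def iterBase (g : MatchedGraph V) : ℕ → V → V → Prop
  | 0, v, b => v = b
  | k + 1, v, b => ∃ u, g.iterBase k v u ∧ g.baseOf u b

/-- A vertex is outer if `evenlevel(v) < oddlevel(v)`. -/
def IsOuter (g : MatchedGraph V) (v : V) : Prop := g.evenlevel v < g.oddlevel v

/-- A vertex is inner if it is not outer. -/
def IsInner (g : MatchedGraph V) (v : V) : Prop := g.oddlevel v ≤ g.evenlevel v

/-- The set `S_{b,t}` of vertices of tenacity `t` with base `b`. -/
def Sset (g : MatchedGraph V) (t : ℕ) (b : V) : Set V :=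
  {v | g.tenacity v = (t : ℕ∞) ∧ g.baseOf v b}

/-- The blossom `B_{b,t}`, defined recursively. -/
def blossom (g : MatchedGraph V) : ℕ → V → Set V
  | 0, _ => ∅
  | 1, _ => ∅
  | t + 2, b => g.Sset (t + 2) b ∪
      ⋃ v ∈ {v | (v ∈ g.Sset (t + 2) b ∨ v = b) ∧ g.IsOuter v}, blossom g t v

/-- The nesting depth `N(B_{b,t})` of a blossom. -/
noncomputable def ndepth (g : MatchedGraph V) [Fintype V] : ℕ → V → ℕ
  | 0, _ => 0
  | 1, _ => 0
  | t + 2, b =>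
    if (g.Sset (t + 2) b).Nonempty then
      1 + Finset.univ.sup (fun v =>
        if (v ∈ g.Sset (t + 2) b ∨ v = b) ∧ g.IsOuter v then ndepth g t v else 0)
    else ndepth g t b

/-- `evenlevel(b; v)`: minimum even length of an alternating path from `b` to
`v` starting with an unmatched edge. -/
noncomputable def evenlevelFrom (g : MatchedGraph V) (b v : V) : ℕ∞ :=
  sInf {n : ℕ∞ | ∃ p, g.AltPath p b v ∧ Even (p.length - 1) ∧
    n = ((p.length - 1 : ℕ) : ℕ∞)}

/-- `oddlevel(b; v)`: minimum odd length of an alternating path from `b` to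
`v` starting with an unmatched edge. -/
noncomputable def oddlevelFrom (g : MatchedGraph V) (b v : V) : ℕ∞ :=
  sInf {n : ℕ∞ | ∃ p, g.AltPath p b v ∧ Odd (p.length - 1) ∧
    n = ((p.length - 1 : ℕ) : ℕ∞)}

end MatchedGraph


/-!
On every evenlevel or oddlevel path of a vertex `v` with `tenacity v < l_m`, the base `b` of `v`
is the last vertex of tenacity greater than `tenacity v` (the path starts at an unmatched
vertex, whose tenacity is at least `l_m`). A vertex's tenacity is at most that of its matched
partner, so the edge leaving `b` along the path is unmatched: `b` sits at an even position
strictly before `v`. Hence `evenlevel b` is smaller than both `evenlevel v` and `oddlevel v`,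
and if `b` were inner this would give `tenacity b < tenacity v`. So bases are outer.

For an outer `b`, `b` itself is one of the vertices whose blossoms make up `B_{b,t+2}`, so
`B_{b,t} ⊆ B_{b,t+2}`. For a vertex `b` that is not outer, every `S_{b,t}` is empty, and so is
every `B_{b,t}`.
-/

namespace MatchedGraph

variable {g : MatchedGraph V} {p : List V} {f v x b : V}

namespace AltPath

lemma length_pos (h : g.AltPath p f v) : 0 < p.length := by
  cases p with
  | nil => simp [AltPath] at h
  | cons => simp

lemma getD_zero (h : g.AltPath p f v) : p.getD 0 f = f := by
  rw [List.getD_eq_getElem?_getD, ← List.head?_eq_getElem?, h.1, Option.getD_some]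

lemma getD_length_sub_one (h : g.AltPath p f v) : p.getD (p.length - 1) f = v := by
  rw [List.getD_eq_getElem?_getD, ← List.getLast?_eq_getElem?, h.2.1, Option.getD_some]

lemma getD_inj (h : g.AltPath p f v) {i j : ℕ} (hi : i < p.length) (hj : j < p.length) :
    p.getD i f = p.getD j f ↔ i = j := by
  rw [List.getD_eq_getElem _ _ hi, List.getD_eq_getElem _ _ hj]
  exact h.2.2.1.getElem_inj_iff

lemma ne_of_two_le_length (h : g.AltPath p f v) (hp : 2 ≤ p.length) : f ≠ v := by
  intro hfv
  have := (h.getD_inj (i := 0) (j := p.length - 1) (by omega) (by omega)).1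
    (by rw [h.getD_zero, h.getD_length_sub_one, hfv])
  omega

lemma M_getD_succ (h : g.AltPath p f v) {i : ℕ} (hi : i + 1 < p.length) (hodd : Odd i) :
    g.M (p.getD i f) (p.getD (i + 1) f) :=
  (h.2.2.2 i hi).2.2 (Nat.odd_iff.1 hodd)

lemma take (h : g.AltPath p f v) {i : ℕ} (hi : i < p.length) :
    g.AltPath (p.take (i + 1)) f (p.getD i f) := by
  obtain ⟨hhead, -, hnd, hedge⟩ := h
  have hgetD : ∀ k < i + 1, (p.take (i + 1)).getD k f = p.getD k f := fun k hk => by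
    simp [List.getD_eq_getElem?_getD, hk]
  refine ⟨?_, ?_, hnd.sublist (List.take_sublist _ _), fun k hk => ?_⟩
  · rwa [List.head?_take, if_neg (Nat.succ_ne_zero i)]
  · rw [List.getLast?_take]
    simp [List.getD_eq_getElem?_getD, hi]
  · have hk' : k + 1 < i + 1 := by rw [List.length_take] at hk; omega
    rw [hgetD k (by omega), hgetD (k + 1) hk']
    exact hedge k (by omega)

lemma concat (h : g.AltPath p f x) (hb : b ∉ p) (hadj : g.adj x b)
    (hM : g.M x b ↔ (p.length - 1) % 2 = 1) : g.AltPath (p ++ [b]) f b := by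
  have hgetD : ∀ k < p.length, (p ++ [b]).getD k f = p.getD k f :=
    List.getD_append p [b] f
  refine ⟨by rw [List.head?_append, h.1]; rfl, List.getLast?_concat,
    h.2.2.1.append (List.nodup_singleton b) (List.disjoint_singleton.2 hb), fun i hi => ?_⟩
  rw [List.length_append, List.length_singleton] at hi
  rcases Nat.lt_or_ge (i + 1) p.length with hin | hend
  · rw [hgetD i (by omega), hgetD (i + 1) hin]
    exact h.2.2.2 i hin
  · obtain rfl : i = p.length - 1 := by omega
    rw [hgetD _ (by omega), Nat.sub_add_cancel (by omega), List.getD_append_right _ _ _ _ le_rfl,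
      Nat.sub_self, List.getD_cons_zero, h.getD_length_sub_one]
    exact ⟨hadj, hM⟩

end AltPath

lemma AltPathFrom.evenlevel_getD_le (h : g.AltPathFrom p f v) {i : ℕ} (hi : i < p.length)
    (heven : Even i) : g.evenlevel (p.getD i f) ≤ i := by
  have hlen : (p.take (i + 1)).length - 1 = i := by rw [List.length_take]; omega
  exact sInf_le ⟨p.take (i + 1), f, ⟨h.1, h.2.take hi⟩, by rw [hlen]; exact heven, by rw [hlen]⟩

lemma AltPathFrom.oddlevel_getD_le (h : g.AltPathFrom p f v) {i : ℕ} (hi : i < p.length)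
    (hodd : Odd i) : g.oddlevel (p.getD i f) ≤ i := by
  have hlen : (p.take (i + 1)).length - 1 = i := by rw [List.length_take]; omega
  exact sInf_le ⟨p.take (i + 1), f, ⟨h.1, h.2.take hi⟩, by rw [hlen]; exact hodd, by rw [hlen]⟩

lemma exists_isEvenlevelPath (h : g.evenlevel v ≠ ⊤) : ∃ p f, g.IsEvenlevelPath p f v := by
  have hne : {n : ℕ∞ | ∃ p f, g.AltPathFrom p f v ∧ Even (p.length - 1) ∧
      n = ((p.length - 1 : ℕ) : ℕ∞)}.Nonempty :=
    Set.nonempty_iff_ne_empty.2 fun he => h (by rw [evenlevel, he, sInf_empty])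
  obtain ⟨p, f, hpf, heven, hlen⟩ := csInf_mem hne
  exact ⟨p, f, hpf, heven, hlen.symm⟩

lemma exists_isOddlevelPath (h : g.oddlevel v ≠ ⊤) : ∃ p f, g.IsOddlevelPath p f v := by
  have hne : {n : ℕ∞ | ∃ p f, g.AltPathFrom p f v ∧ Odd (p.length - 1) ∧
      n = ((p.length - 1 : ℕ) : ℕ∞)}.Nonempty :=
    Set.nonempty_iff_ne_empty.2 fun he => h (by rw [oddlevel, he, sInf_empty])
  obtain ⟨p, f, hpf, hodd, hlen⟩ := csInf_mem hne
  exact ⟨p, f, hpf, hodd, hlen.symm⟩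

lemma lm_le_oddlevel (hf : g.unmatched f) : g.lm ≤ g.oddlevel f := by
  refine le_sInf ?_
  rintro _ ⟨p, f', hpf, hodd, rfl⟩
  have hlen : 2 ≤ p.length := by obtain ⟨k, hk⟩ := hodd; omega
  exact sInf_le ⟨p, f', f, hpf, hf, hpf.2.ne_of_two_le_length hlen, rfl⟩

lemma lm_le_tenacity (hf : g.unmatched f) : g.lm ≤ g.tenacity f :=
  (lm_le_oddlevel hf).trans le_add_self

lemma oddlevel_add_one_le_evenlevel (hM : g.M b x) : g.oddlevel b + 1 ≤ g.evenlevel x := by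
  by_cases htop : g.evenlevel x = ⊤
  · simp [htop]
  obtain ⟨P, f, ⟨hf, hP⟩, heven, hlen⟩ := exists_isEvenlevelPath htop
  rw [← hlen]
  set n := P.length - 1
  have hn : n ≠ 0 := fun h0 => by
    have hx := hP.getD_length_sub_one
    rw [show P.length - 1 = 0 from h0, hP.getD_zero] at hx
    exact hf b (hx ▸ g.M_symm _ _ hM)
  have hlast : P.getD (n - 1 + 1) f = x := by
    rw [Nat.sub_add_cancel (Nat.one_le_iff_ne_zero.2 hn)]
    exact hP.getD_length_sub_one
  have hodd : Odd (n - 1) := by obtain ⟨k, hk⟩ := heven; exact ⟨k - 1, by omega⟩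
  have hMprev := hP.M_getD_succ (by omega) hodd
  rw [hlast] at hMprev
  have hb : P.getD (n - 1) f = b :=
    g.M_matching x _ _ (g.M_symm _ _ hMprev) (g.M_symm _ _ hM)
  calc g.oddlevel b + 1 ≤ ((n - 1 : ℕ) : ℕ∞) + 1 := by
        gcongr
        exact hb ▸ AltPathFrom.oddlevel_getD_le ⟨hf, hP⟩ (by omega) hodd
    _ = n := by norm_cast; omega

lemma evenlevel_le_oddlevel_add_one (hM : g.M b x) : g.evenlevel b ≤ g.oddlevel x + 1 := by
  by_cases htop : g.oddlevel x = ⊤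
  · simp [htop]
  obtain ⟨W, f, ⟨hf, hW⟩, hodd, hlen⟩ := exists_isOddlevelPath htop
  rw [← hlen]
  by_cases hbW : b ∈ W
  · obtain ⟨m, hm, hWm⟩ := List.getElem_of_mem hbW
    have hbm : W.getD m f = b := by rw [List.getD_eq_getElem _ _ hm, hWm]
    rcases Nat.even_or_odd m with heven | hmodd
    · calc g.evenlevel b ≤ m := hbm ▸ AltPathFrom.evenlevel_getD_le ⟨hf, hW⟩ hm heven
        _ ≤ ((W.length - 1 : ℕ) : ℕ∞) + 1 := by norm_cast; omega
    · -- the matched edge leaving `b` would end at `x`, whose position in `W` is odd as well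
      have hm1 : m + 1 < W.length := by
        refine lt_of_le_of_ne hm fun hend => g.loopless x (g.M_sub _ _ ?_)
        rwa [← hbm, show m = W.length - 1 by omega, hW.getD_length_sub_one] at hM
      have hnext : W.getD (m + 1) f = W.getD (W.length - 1) f := by
        rw [hW.getD_length_sub_one]
        exact g.M_matching b _ _ (hbm ▸ hW.M_getD_succ hm1 hmodd) hM
      have := (hW.getD_inj hm1 (by omega)).1 hnext
      obtain ⟨k, hk⟩ := hodd; obtain ⟨j, hj⟩ := hmodd; omega
  · have hWb : g.AltPath (W ++ [b]) f b :=
      hW.concat hbW (g.M_sub _ _ (g.M_symm _ _ hM))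
        (iff_of_true (g.M_symm _ _ hM) (Nat.odd_iff.1 hodd))
    have hlen' : (W ++ [b]).length - 1 = W.length - 1 + 1 := by
      have := hW.length_pos
      rw [List.length_append, List.length_singleton]; omega
    exact sInf_le ⟨W ++ [b], f, ⟨hf, hWb⟩, hlen' ▸ hodd.add_one, by rw [hlen']; norm_cast⟩

lemma tenacity_le_of_M (hM : g.M b x) : g.tenacity b ≤ g.tenacity x := by
  refine (ENat.add_le_add_iff_right ENat.one_ne_top).1 ?_
  calc g.tenacity b + 1 = g.evenlevel b + (g.oddlevel b + 1) := by rw [tenacity, add_assoc]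
    _ ≤ (g.oddlevel x + 1) + g.evenlevel x :=
        add_le_add (evenlevel_le_oddlevel_add_one hM) (oddlevel_add_one_le_evenlevel hM)
    _ = g.tenacity x + 1 := by rw [tenacity]; ring

lemma tenacity_lt_of_baseOf (hb : g.baseOf v b) : g.tenacity v < g.tenacity b := by
  have hmem : b ∈ g.Bset v := by rw [hb]; exact Set.mem_singleton b
  obtain ⟨p, f, i, -, -, rfl, h, -⟩ := hmem
  exact h

lemma exists_getD_eq_baseOf (hlm : g.tenacity v < g.lm) (hb : g.baseOf v b)
    (hp : g.IsEvenlevelPath p f v ∨ g.IsOddlevelPath p f v) :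
    ∃ i < p.length, p.getD i f = b ∧
      ∀ k, i < k → k < p.length → g.tenacity (p.getD k f) ≤ g.tenacity v := by
  have hpf : g.AltPathFrom p f v := hp.elim (·.1) (·.1)
  have hlen := hpf.2.length_pos
  set P : ℕ → Prop := fun k => g.tenacity v < g.tenacity (p.getD k f)
  set i := Nat.findGreatest P (p.length - 1)
  have hi : P i := by
    refine Nat.findGreatest_spec (Nat.zero_le _) ?_
    simp only [P, hpf.2.getD_zero]
    exact hlm.trans_le (lm_le_tenacity hpf.1)
  have hip : i < p.length := (Nat.findGreatest_le _).trans_lt (by omega)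
  have hmax : ∀ k, i < k → k < p.length → g.tenacity (p.getD k f) ≤ g.tenacity v :=
    fun k hik hk => not_lt.1 (Nat.findGreatest_is_greatest hik (by omega))
  have hmem : p.getD i f ∈ g.Bset v := ⟨p, f, i, hp, hip, rfl, hi, hmax⟩
  rw [hb] at hmem
  exact ⟨i, hip, hmem, hmax⟩

lemma evenlevel_lt_of_baseOf (hlm : g.tenacity v < g.lm) (hb : g.baseOf v b)
    (hp : g.IsEvenlevelPath p f v ∨ g.IsOddlevelPath p f v) :
    g.evenlevel b < ((p.length - 1 : ℕ) : ℕ∞) := by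
  have hpf : g.AltPathFrom p f v := hp.elim (·.1) (·.1)
  have htb := tenacity_lt_of_baseOf hb
  obtain ⟨i, hi, rfl, hmax⟩ := exists_getD_eq_baseOf hlm hb hp
  have hlast : i ≠ p.length - 1 := fun h => by
    rw [h, hpf.2.getD_length_sub_one] at htb
    exact lt_irrefl _ htb
  have heven : Even i := by
    by_contra hodd
    have hM := hpf.2.M_getD_succ (by omega) (Nat.not_even_iff_odd.1 hodd)
    exact ((tenacity_le_of_M hM).trans (hmax (i + 1) (by omega) (by omega))).not_gt htb
  calc g.evenlevel (p.getD i f) ≤ i := hpf.evenlevel_getD_le hi heven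
    _ < ((p.length - 1 : ℕ) : ℕ∞) := by norm_cast; omega

lemma isOuter_of_baseOf (hlm : g.tenacity v < g.lm) (hb : g.baseOf v b) : g.IsOuter b := by
  have hfin : g.evenlevel v ≠ ⊤ ∧ g.oddlevel v ≠ ⊤ :=
    WithTop.add_ne_top.1 (hlm.trans_le le_top).ne
  obtain ⟨p, f, hp⟩ := exists_isEvenlevelPath hfin.1
  obtain ⟨q, f', hq⟩ := exists_isOddlevelPath hfin.2
  have he : g.evenlevel b < g.evenlevel v := hp.2.2 ▸ evenlevel_lt_of_baseOf hlm hb (.inl hp)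
  have ho : g.evenlevel b < g.oddlevel v := hq.2.2 ▸ evenlevel_lt_of_baseOf hlm hb (.inr hq)
  by_contra hinner
  have : g.tenacity b < g.tenacity v :=
    calc g.tenacity b ≤ g.evenlevel b + g.evenlevel b := add_le_add le_rfl (not_lt.1 hinner)
      _ < g.evenlevel v + g.oddlevel v := ENat.add_lt_add he ho
  exact this.not_gt (tenacity_lt_of_baseOf hb)

lemma blossom_subset_blossom_add_two (hb : g.IsOuter b) (t : ℕ) :
    g.blossom t b ⊆ g.blossom (t + 2) b :=
  fun _ hx => Or.inr (Set.mem_biUnion ⟨Or.inr rfl, hb⟩ hx)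

lemma blossom_subset_blossom_add_two_mul (hb : g.IsOuter b) (t k : ℕ) :
    g.blossom t b ⊆ g.blossom (t + 2 * k) b := by
  induction k with
  | zero => exact subset_rfl
  | succ k ih => exact ih.trans (blossom_subset_blossom_add_two hb _)

lemma blossom_eq_empty_of_not_isOuter (hb : ¬g.IsOuter b) {t : ℕ} (ht : (t : ℕ∞) < g.lm) :
    g.blossom t b = ∅ := by
  match t with
  | 0 | 1 => rfl
  | t + 2 =>
    have hS : g.Sset (t + 2) b = ∅ :=
      Set.eq_empty_of_forall_notMem fun v hv => hb (isOuter_of_baseOf (hv.1 ▸ ht) hv.2)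
    simp [blossom, hS, hb]

end MatchedGraph

theorem blossom_subset_of_le_general (g : MatchedGraph V) (b : V) (t t' : ℕ)
    (hodd : Odd t) (hodd' : Odd t') (htt' : t ≤ t')
    (ht'lm : (t' : ℕ∞) < g.lm) :
    g.blossom t b ⊆ g.blossom t' b := by
  by_cases hb : g.IsOuter b
  · obtain ⟨k, rfl⟩ : ∃ k, t' = t + 2 * k := by
      obtain ⟨a, rfl⟩ := hodd
      obtain ⟨c, rfl⟩ := hodd'
      exact ⟨c - a, by omega⟩
    exact g.blossom_subset_blossom_add_two_mul hb t k
  · rw [g.blossom_eq_empty_of_not_isOuter hb ((Nat.cast_le.2 htt').trans_lt ht'lm)]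
    exact Set.empty_subset _

/-- Two blossoms with the same base `b` and tenacities
`t ≤ t' < tenacity(b)` with `t' < l_m` satisfy `B_{b,t} ⊆ B_{b,t'}`. -/
theorem blossom_subset_of_le (g : MatchedGraph V) (b : V) (t t' : ℕ)
    (hodd : Odd t) (hodd' : Odd t') (htt' : t ≤ t')
    (ht'b : (t' : ℕ∞) < g.tenacity b) (ht'lm : (t' : ℕ∞) < g.lm)
    (hclaim : ∀ w, g.tenacity w ≤ (t' : ℕ∞) → ∃ b', g.baseOf w b') :
    g.blossom t b ⊆ g.blossom t' b :=
  blossom_subset_of_le_general g b t t' hodd hodd' htt' ht'lm
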